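/- arXiv:2101.07860 — 5 statements merged into one kernel-verified Lean document; each statement's English description precedes it below -/
import Mathlib

section
/- Let E be a Hilbert space, S a Hilbert–Schmidt operator on E such that Id_E + S is self-adjoint and nonnegative. Then the operator √(Id_E + S) − Id_E is Hilbert–Schmidt on E. -/
/-
Since `R² = 1 + S`, we have `(R + 1)(R - 1) = S`. For a positive `R` the operator `R + 1` is
bounded below by `1`, i.e. `‖y‖ ≤ ‖(R + 1) y‖`, so `‖(R - 1) x‖ ≤ ‖S x‖` for every `x`. On a
Hilbert basis along which `∑ ‖S bⱼ‖²` converges, the series `∑ ‖(R - 1) bⱼ‖²` therefore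
converges too.
-/

open ContinuousLinearMap

/-- A bounded operator on a Hilbert space is Hilbert–Schmidt if the squared norms of its values
on some (ℕ-indexed) Hilbert basis are summable. -/
def IsHilbertSchmidt {E : Type*} [NormedAddCommGroup E] [InnerProductSpace ℝ E]
    [CompleteSpace E] (S : E →L[ℝ] E) : Prop :=
  ∃ b : HilbertBasis ℕ ℝ E, Summable fun j => ‖S (b j)‖ ^ 2

theorem IsHilbertSchmidt.of_norm_apply_le {E : Type*} [NormedAddCommGroup E]
    [InnerProductSpace ℝ E] [CompleteSpace E] {S T : E →L[ℝ] E} (hS : IsHilbertSchmidt S)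
    (hTS : ∀ x, ‖T x‖ ≤ ‖S x‖) : IsHilbertSchmidt T := by
  obtain ⟨b, hb⟩ := hS
  exact ⟨b, hb.of_nonneg_of_le (fun _ => by positivity)
    (fun j => pow_le_pow_left₀ (norm_nonneg _) (hTS (b j)) 2)⟩

theorem ContinuousLinearMap.IsPositive.norm_le_norm_add_one_apply {𝕜 E : Type*} [RCLike 𝕜]
    [NormedAddCommGroup E] [InnerProductSpace 𝕜 E] {R : E →L[𝕜] E} (hR : R.IsPositive)
    (y : E) : ‖y‖ ≤ ‖(R + 1) y‖ := by
  have hsq : ‖y‖ * ‖y‖ ≤ ‖(R + 1) y‖ * ‖y‖ :=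
    calc ‖y‖ * ‖y‖ ≤ RCLike.re (inner 𝕜 (R y) y) + ‖y‖ ^ 2 := by
          nlinarith [hR.re_inner_nonneg_left y]
      _ = RCLike.re (inner 𝕜 ((R + 1) y) y) := by
          simp [inner_add_left]
      _ ≤ ‖(R + 1) y‖ * ‖y‖ := re_inner_le_norm _ _
  rcases (norm_nonneg y).eq_or_lt with hy | hy
  · rw [← hy]; exact norm_nonneg _
  · exact le_of_mul_le_mul_right hsq hy

theorem ContinuousLinearMap.IsPositive.norm_sub_one_apply_le {𝕜 E : Type*} [RCLike 𝕜]
    [NormedAddCommGroup E] [InnerProductSpace 𝕜 E] {R : E →L[𝕜] E} (hR : R.IsPositive)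
    (x : E) : ‖(R - 1) x‖ ≤ ‖(R * R - 1) x‖ := by
  rw [mul_self_sub_one]
  exact hR.norm_le_norm_add_one_apply _

theorem stmt1_general {E : Type*} [NormedAddCommGroup E] [InnerProductSpace ℝ E] [CompleteSpace E]
    (S R : E →L[ℝ] E) (hS : IsHilbertSchmidt S)
    (hRpos : R.IsPositive) (hRsq : R ∘L R = 1 + S) :
    IsHilbertSchmidt (R - 1) := by
  have hS_eq : R * R - 1 = S := by
    rw [mul_def, hRsq, add_sub_cancel_left]
  exact hS.of_norm_apply_le fun x => hS_eq ▸ hRpos.norm_sub_one_apply_le x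

/-- If `S` is Hilbert–Schmidt and `Id + S` is self-adjoint and nonnegative, then
`√(Id + S) − Id` is Hilbert–Schmidt.  Here `R` denotes the (unique) nonnegative self-adjoint
square root of `Id + S`. -/
theorem stmt1 {E : Type*} [NormedAddCommGroup E] [InnerProductSpace ℝ E] [CompleteSpace E]
    (S R : E →L[ℝ] E) (hS : IsHilbertSchmidt S)
    (hpos : (1 + S).IsPositive)
    (hRpos : R.IsPositive) (hRsq : R ∘L R = 1 + S) :
    IsHilbertSchmidt (R - 1) :=
  stmt1_general S R hS hRpos hRsq
end

section
/- Let E be a Hilbert space, K a compact operator on E such that Id_E + K is self-adjoint and nonnegative. Then √(Id_E + K) − Id_E is a compact operator on E. -/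
/-!
Since `R` commutes with `1`, `(R - 1)(R + 1) = R² - 1 = K`. As `R ≥ 0`, the operator `R + 1` is
bounded below by the identity and hence invertible, so `R - 1 = K (R + 1)⁻¹` is compact.
-/

open ContinuousLinearMap

namespace ContinuousLinearMap

variable {𝕜 E : Type*} [RCLike 𝕜] [NormedAddCommGroup E] [InnerProductSpace 𝕜 E]

theorem IsPositive.isUnit_add_one [CompleteSpace E] {R : E →L[𝕜] E} (hR : R.IsPositive) :
    IsUnit (R + 1) := by
  refine isUnit_of_forall_le_norm_inner_map _ one_pos fun x => ?_
  calc ‖x‖ ^ 2 * (1 : NNReal) ≤ RCLike.re (inner 𝕜 (R x) x) + ‖x‖ ^ 2 := by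
        simpa using hR.re_inner_nonneg_left x
    _ = RCLike.re (inner 𝕜 ((R + 1) x) x) := by simp [inner_add_left]
    _ ≤ ‖inner 𝕜 ((R + 1) x) x‖ := RCLike.re_le_norm _

end ContinuousLinearMap

theorem IsCompactOperator.of_mul_isUnit {R M : Type*} [Semiring R] [TopologicalSpace M]
    [AddCommMonoid M] [Module R M] {T S : M →L[R] M} (hS : IsUnit S)
    (hTS : IsCompactOperator ⇑(T * S)) : IsCompactOperator ⇑T := by
  obtain ⟨u, rfl⟩ := hS
  rw [show T = T * u * ↑u⁻¹ by rw [mul_assoc, Units.mul_inv, mul_one]]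
  exact hTS.comp_clm _

theorem stmt2_general {E : Type*} [NormedAddCommGroup E] [InnerProductSpace ℝ E] [CompleteSpace E]
    (K R : E →L[ℝ] E) (hK : IsCompactOperator ⇑K)
    (hRpos : R.IsPositive) (hRsq : R ∘L R = 1 + K) :
    IsCompactOperator ⇑(R - 1) := by
  have hfactor : (R - 1) * (R + 1) = K :=
    calc (R - 1) * (R + 1) = R * R - 1 := by noncomm_ring
      _ = K := by rw [mul_def, hRsq, add_sub_cancel_left]
  exact IsCompactOperator.of_mul_isUnit hRpos.isUnit_add_one (hfactor ▸ hK)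

/-- If `K` is a compact operator and `Id + K` is self-adjoint and nonnegative, then
`√(Id + K) − Id` is a compact operator.  Here `R` denotes the (unique) nonnegative
self-adjoint square root of `Id + K`. -/
theorem stmt2 {E : Type*} [NormedAddCommGroup E] [InnerProductSpace ℝ E] [CompleteSpace E]
    (K R : E →L[ℝ] E) (hK : IsCompactOperator ⇑K)
    (hpos : (1 + K).IsPositive)
    (hRpos : R.IsPositive) (hRsq : R ∘L R = 1 + K) :
    IsCompactOperator ⇑(R - 1) :=
  stmt2_general K R hK hRpos hRsq
end

section
/- Let E be a separable Hilbert space and T ∈ 𝓛(E). Then T is invertible on E with T T* − Id_E compact on E if and only if there exist an orthogonal (unitary) operator W on E and a self-adjoint compact operator K on E such that Id_E + K is invertible and T = W (Id_E + K). -/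
/-!
For invertible `T` the operator `T* T` is coercive, so it has a coercive self-adjoint square root
`P`, and `W = T P⁻¹` is orthogonal. Since `T* T - 1 = T⁻¹ (T T* - 1) T` is compact and `P + 1` is
invertible, `K = P - 1 = (P + 1)⁻¹ (T* T - 1)` is compact. The square root comes from the Banach
fixed point theorem: after rescaling, `T* T = 1 - S` with `‖S‖ < 1`, and `(1 - X)² = 1 - S` is the
fixed point equation of `X ↦ (S + X²) / 2`, a contraction on a small ball of self-adjoint
operators. Conversely, `T T* - 1 = W (2K + K²) W*` when `T = W (1 + K)`.
-/

open ContinuousLinearMap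
open scoped InnerProductSpace

lemma IsUnit.mul_eq_one_of_mul_eq_one {M : Type*} [Monoid M] {a b : M} (ha : IsUnit a)
    (h : b * a = 1) : a * b = 1 := by
  have hb : b = ↑ha.unit⁻¹ :=
    calc b = b * a * ↑ha.unit⁻¹ := by rw [mul_assoc, ha.mul_val_inv, mul_one]
      _ = ↑ha.unit⁻¹ := by rw [h, one_mul]
  rw [hb, ha.mul_val_inv]

section SquareRoot

variable {A : Type*} [NormedRing A] [NormedAlgebra ℝ A]

lemma norm_smul_half_add_mul_self_le {S X : A} {q r : ℝ} (hS : ‖S‖ ≤ q) (hX : ‖X‖ ≤ r)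
    (hqr : q + r * r = 2 * r) : ‖(2⁻¹ : ℝ) • (S + X * X)‖ ≤ r := by
  have hXX : ‖X * X‖ ≤ r * r :=
    (norm_mul_le X X).trans (mul_self_le_mul_self (norm_nonneg X) hX)
  rw [norm_smul, Real.norm_of_nonneg (by norm_num)]
  linarith [norm_add_le S (X * X)]

lemma dist_smul_half_add_mul_self_le (S : A) {X Y : A} {r : ℝ} (hX : ‖X‖ ≤ r) (hY : ‖Y‖ ≤ r) :
    dist ((2⁻¹ : ℝ) • (S + X * X)) ((2⁻¹ : ℝ) • (S + Y * Y)) ≤ r * dist X Y := by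
  have hdiff : (2⁻¹ : ℝ) • (S + X * X) - (2⁻¹ : ℝ) • (S + Y * Y) =
      (2⁻¹ : ℝ) • (X * (X - Y) + (X - Y) * Y) := by
    rw [← smul_sub]
    noncomm_ring
  rw [dist_eq_norm, dist_eq_norm, hdiff, norm_smul, Real.norm_of_nonneg (by norm_num)]
  have hXY := norm_nonneg (X - Y)
  calc 2⁻¹ * ‖X * (X - Y) + (X - Y) * Y‖
      ≤ 2⁻¹ * (‖X‖ * ‖X - Y‖ + ‖X - Y‖ * ‖Y‖) := by
        gcongr
        exact (norm_add_le _ _).trans (add_le_add (norm_mul_le _ _) (norm_mul_le _ _))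
    _ ≤ 2⁻¹ * (r * ‖X - Y‖ + ‖X - Y‖ * r) := by gcongr
    _ = r * ‖X - Y‖ := by ring

variable [CompleteSpace A] [StarRing A] [StarModule ℝ A] [ContinuousStar A]

/-- `X` is the fixed point of `X ↦ (S + X²) / 2` on the closed ball of self-adjoint elements of
radius `1 - √(1 - q)`, the smaller root of `r² - 2r + q`. -/
theorem exists_isSelfAdjoint_one_sub_mul_self_eq {S : A} (hS : IsSelfAdjoint S) {q : ℝ}
    (hq0 : 0 ≤ q) (hq1 : q < 1) (hSq : ‖S‖ ≤ q) :
    ∃ X : A, IsSelfAdjoint X ∧ ‖X‖ ≤ 1 - √(1 - q) ∧ (1 - X) * (1 - X) = 1 - S := by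
  set r := 1 - √(1 - q)
  have hr0 : 0 ≤ r := by
    have : √(1 - q) ≤ 1 := Real.sqrt_le_one.mpr (by linarith)
    linarith
  have hr1 : r < 1 := by
    have : 0 < √(1 - q) := Real.sqrt_pos.mpr (by linarith)
    linarith
  have hqr : q + r * r = 2 * r := by
    have := Real.sq_sqrt (show 0 ≤ 1 - q by linarith)
    nlinarith
  set s : Set A := {X | ‖X‖ ≤ r ∧ IsSelfAdjoint X}
  set f : A → A := fun X ↦ (2⁻¹ : ℝ) • (S + X * X)
  have hsc : IsComplete s :=
    ((isClosed_le continuous_norm continuous_const).inter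
      (isClosed_eq continuous_star continuous_id)).isComplete
  have hsf : Set.MapsTo f s s := fun X ⟨hXr, hXsa⟩ ↦
    ⟨norm_smul_half_add_mul_self_le hSq hXr hqr,
      (IsSelfAdjoint.all _).smul (hS.add (by simpa only [sq] using hXsa.pow 2))⟩
  have hf : ContractingWith ⟨r, hr0⟩ (hsf.restrict f s s) :=
    ⟨by exact_mod_cast hr1, (LipschitzOnWith.of_dist_le_mul fun X hX Y hY ↦
      dist_smul_half_add_mul_self_le S hX.1 hY.1).mapsToRestrict hsf⟩
  obtain ⟨X, ⟨hXr, hXsa⟩, hfix, -⟩ :=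
    hf.exists_fixedPoint' hsc hsf (x := 0) ⟨by simpa using hr0, .zero _⟩ (edist_ne_top _ _)
  refine ⟨X, hXsa, hXr, ?_⟩
  have hfix' : S + X * X = X + X :=
    calc S + X * X = (2 : ℝ) • f X := by simp only [f, smul_smul]; norm_num
      _ = X + X := by rw [hfix.eq, two_smul]
  calc (1 - X) * (1 - X) = 1 - (X + X) + X * X := by noncomm_ring
    _ = 1 - S := by rw [← hfix']; abel

end SquareRoot

section NormedSpace

variable {𝕜 F : Type*} [NontriviallyNormedField 𝕜] [NormedAddCommGroup F] [NormedSpace 𝕜 F]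

lemma IsUnit.exists_forall_mul_sq_le_norm_apply_sq {T : F →L[𝕜] F} (hT : IsUnit T) :
    ∃ m > 0, ∀ v, m * ‖v‖ ^ 2 ≤ ‖T v‖ ^ 2 := by
  set C := ‖(↑hT.unit⁻¹ : F →L[𝕜] F)‖
  refine ⟨(C ^ 2 + 1)⁻¹, by positivity, fun v ↦ ?_⟩
  have hv : ‖v‖ ≤ C * ‖T v‖ := by
    simpa [← mul_apply_eq_comp, hT.val_inv_mul] using (↑hT.unit⁻¹ : F →L[𝕜] F).le_opNorm (T v)
  rw [inv_mul_le_iff₀ (by positivity)]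
  nlinarith [pow_le_pow_left₀ (norm_nonneg v) hv 2, sq_nonneg ‖T v‖]

lemma IsCompactOperator.of_isUnit_mul {S K : F →L[𝕜] F} (hS : IsUnit S)
    (h : IsCompactOperator ⇑(S * K)) : IsCompactOperator ⇑K := by
  have := h.clm_comp (↑hS.unit⁻¹ : F →L[𝕜] F)
  rwa [← FunLike.coe_mul_eq_comp, ← mul_assoc, hS.val_inv_mul, one_mul] at this

end NormedSpace

section Hilbert

variable {E : Type*} [NormedAddCommGroup E] [InnerProductSpace ℝ E]

lemma real_inner_apply_self_le (T : E →L[ℝ] E) (v : E) : ⟪T v, v⟫_ℝ ≤ ‖T‖ * ‖v‖ ^ 2 :=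
  calc ⟪T v, v⟫_ℝ ≤ ‖T v‖ * ‖v‖ := real_inner_le_norm _ _
    _ ≤ ‖T‖ * ‖v‖ * ‖v‖ := by gcongr; exact T.le_opNorm v
    _ = ‖T‖ * ‖v‖ ^ 2 := by ring

lemma LinearMap.IsSymmetric.norm_le_of_forall_abs_inner_le {S : E →L[ℝ] E}
    (hS : (S : E →ₗ[ℝ] E).IsSymmetric) {q : ℝ} (hq : 0 ≤ q)
    (h : ∀ v, |⟪S v, v⟫_ℝ| ≤ q * ‖v‖ ^ 2) : ‖S‖ ≤ q := by
  rw [S.norm_eq_iSup_rayleighQuotient hS]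
  refine ciSup_le fun v ↦ ?_
  rcases eq_or_ne v 0 with rfl | hv
  · simpa using hq
  rw [rayleighQuotient, reApplyInnerSelf_apply, abs_div, abs_sq, div_le_iff₀ (by positivity)]
  simpa using h v

variable [CompleteSpace E]

lemma isUnit_of_forall_mul_sq_le_inner {P : E →L[ℝ] E} {ε : ℝ} (hε : 0 < ε)
    (h : ∀ v, ε * ‖v‖ ^ 2 ≤ ⟪P v, v⟫_ℝ) : IsUnit P :=
  isUnit_of_forall_le_norm_inner_map P (c := ⟨ε, hε.le⟩) hε fun v ↦
    calc ‖v‖ ^ 2 * ε = ε * ‖v‖ ^ 2 := mul_comm _ _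
      _ ≤ ⟪P v, v⟫_ℝ := h v
      _ ≤ ‖⟪P v, v⟫_ℝ‖ := Real.le_norm_self _

lemma IsSelfAdjoint.norm_one_sub_inv_smul_le {A : E →L[ℝ] E} (hA : IsSelfAdjoint A) {m M : ℝ}
    (hM : 0 < M) (hmM : m ≤ M) (hlow : ∀ v, m * ‖v‖ ^ 2 ≤ ⟪A v, v⟫_ℝ)
    (hup : ∀ v, ⟪A v, v⟫_ℝ ≤ M * ‖v‖ ^ 2) : ‖1 - M⁻¹ • A‖ ≤ 1 - m / M := by
  have hmM' : m / M ≤ 1 := (div_le_one hM).mpr hmM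
  have hsa : IsSelfAdjoint (1 - M⁻¹ • A) := .sub (.one _) ((IsSelfAdjoint.all _).smul hA)
  refine hsa.isSymmetric.norm_le_of_forall_abs_inner_le (sub_nonneg.mpr hmM') fun v ↦ ?_
  have hinner : ⟪(1 - M⁻¹ • A) v, v⟫_ℝ = ‖v‖ ^ 2 - ⟪A v, v⟫_ℝ / M := by
    simp [inner_sub_left, real_inner_smul_left, div_eq_inv_mul]
  have hle : ⟪A v, v⟫_ℝ / M ≤ ‖v‖ ^ 2 := by
    rw [div_le_iff₀ hM, mul_comm]
    exact hup v
  have hge : m / M * ‖v‖ ^ 2 ≤ ⟪A v, v⟫_ℝ / M := by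
    rw [div_mul_eq_mul_div]
    gcongr
    exact hlow v
  rw [hinner, abs_le]
  constructor <;> nlinarith [sq_nonneg ‖v‖]

theorem IsSelfAdjoint.exists_sqrt_of_coercive {A : E →L[ℝ] E} (hA : IsSelfAdjoint A) {m : ℝ}
    (hm : 0 < m) (hlow : ∀ v, m * ‖v‖ ^ 2 ≤ ⟪A v, v⟫_ℝ) :
    ∃ P : E →L[ℝ] E, IsSelfAdjoint P ∧ P * P = A ∧
      ∃ ε > 0, ∀ v, ε * ‖v‖ ^ 2 ≤ ⟪P v, v⟫_ℝ := by
  -- `m ≤ ⟪A v, v⟫ / ‖v‖² ≤ M`, so `A / M` lies within `1 - m / M` of the identity.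
  set M := ‖A‖ + m
  have hM : 0 < M := by positivity
  have hmM : m ≤ M := le_add_of_nonneg_left (norm_nonneg A)
  have hup v : ⟪A v, v⟫_ℝ ≤ M * ‖v‖ ^ 2 :=
    (real_inner_apply_self_le A v).trans (by gcongr; linarith)
  obtain ⟨X, hXsa, hXr, hX⟩ := exists_isSelfAdjoint_one_sub_mul_self_eq
    (.sub (.one _) ((IsSelfAdjoint.all _).smul hA))
    (sub_nonneg.mpr ((div_le_one hM).mpr hmM)) (sub_lt_self _ (by positivity))
    (hA.norm_one_sub_inv_smul_le hM hmM hlow hup)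
  rw [sub_sub_cancel] at hX hXr
  refine ⟨√M • (1 - X), (IsSelfAdjoint.all _).smul (.sub (.one _) hXsa), ?_,
    √M * √(m / M), by positivity, fun v ↦ ?_⟩
  · rw [smul_mul_smul_comm, hX, Real.mul_self_sqrt hM.le, smul_smul, mul_inv_cancel₀ hM.ne',
      one_smul]
  · have hXv := real_inner_apply_self_le X v
    have hinner : ⟪(√M • (1 - X)) v, v⟫_ℝ = √M * (‖v‖ ^ 2 - ⟪X v, v⟫_ℝ) := by
      simp [inner_sub_left, real_inner_smul_left]
    rw [hinner, mul_assoc]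
    gcongr
    nlinarith [sq_nonneg ‖v‖]

theorem exists_orthogonal_mul_one_add_compact {T : E →L[ℝ] E} (hT : IsUnit T)
    (hTc : IsCompactOperator ⇑(T * adjoint T - 1)) :
    ∃ W K : E →L[ℝ] E, (adjoint W * W = 1 ∧ W * adjoint W = 1) ∧
      IsSelfAdjoint K ∧ IsCompactOperator ⇑K ∧ IsUnit (1 + K) ∧ T = W * (1 + K) := by
  obtain ⟨m, hm, hTm⟩ := hT.exists_forall_mul_sq_le_norm_apply_sq
  obtain ⟨P, hPsa, hPP, ε, hε, hPε⟩ := (IsSelfAdjoint.star_mul_self T).exists_sqrt_of_coercive hm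
    fun v ↦ by simpa [star_eq_adjoint, adjoint_inner_left, real_inner_self_eq_norm_sq] using hTm v
  have hPu : IsUnit P := isUnit_of_forall_mul_sq_le_inner hε hPε
  have hP1u : IsUnit (P + 1) := isUnit_of_forall_mul_sq_le_inner (add_pos hε one_pos) fun v ↦ by
    simpa [inner_add_left, add_mul, real_inner_self_eq_norm_sq] using hPε v
  have hA : IsCompactOperator ⇑(adjoint T * T - 1) := by
    refine IsCompactOperator.of_isUnit_mul hT ?_
    rw [show T * (adjoint T * T - 1) = (T * adjoint T - 1) * T by noncomm_ring]
    exact hTc.comp_clm T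
  have hK : IsCompactOperator ⇑(P - 1) := by
    refine IsCompactOperator.of_isUnit_mul hP1u ?_
    rwa [show (P + 1) * (P - 1) = P * P - 1 by noncomm_ring, hPP, star_eq_adjoint]
  set Q : E →L[ℝ] E := ↑hPu.unit⁻¹
  have hW : adjoint (T * Q) * (T * Q) = 1 := by
    have hQ : star Q * P = 1 := by
      rw [← hPsa.star_eq, ← star_mul, hPu.mul_val_inv, star_one]
    calc adjoint (T * Q) * (T * Q) = star Q * (star T * T) * Q := by
          rw [← star_eq_adjoint, star_mul]; noncomm_ring
      _ = (star Q * P) * (P * Q) := by rw [← hPP]; noncomm_ring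
      _ = 1 := by rw [hQ, hPu.mul_val_inv, one_mul]
  refine ⟨T * Q, P - 1, ⟨hW, (hT.mul hPu.unit⁻¹.isUnit).mul_eq_one_of_mul_eq_one hW⟩,
    hPsa.sub (.one _), hK, by rwa [add_sub_cancel], ?_⟩
  rw [add_sub_cancel, mul_assoc, hPu.val_inv_mul, mul_one]

theorem isUnit_and_isCompactOperator_of_orthogonal_mul_one_add {W K : E →L[ℝ] E}
    (hW : adjoint W * W = 1 ∧ W * adjoint W = 1) (hK : IsSelfAdjoint K)
    (hKc : IsCompactOperator ⇑K) (hKu : IsUnit (1 + K)) :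
    IsUnit (W * (1 + K)) ∧
      IsCompactOperator ⇑(W * (1 + K) * adjoint (W * (1 + K)) - 1 : E →L[ℝ] E) := by
  have hWu : IsUnit W := ⟨⟨W, adjoint W, hW.2, hW.1⟩, rfl⟩
  have hT : W * (1 + K) * adjoint (W * (1 + K)) - 1 = W * (K + K + K * K) * adjoint W := by
    rw [← star_eq_adjoint, star_mul, star_add, star_one, hK.star_eq, star_eq_adjoint]
    calc W * (1 + K) * ((1 + K) * adjoint W) - 1
        = W * (1 + K) * ((1 + K) * adjoint W) - W * adjoint W := by rw [hW.2]
      _ = W * (K + K + K * K) * adjoint W := by noncomm_ring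
  rw [hT]
  exact ⟨hWu.mul hKu, (((hKc.add hKc).add (hKc.comp_clm K)).comp_clm (adjoint W)).clm_comp W⟩

end Hilbert

theorem stmt3_general {E : Type*} [NormedAddCommGroup E] [InnerProductSpace ℝ E] [CompleteSpace E]
    (T : E →L[ℝ] E) :
    (IsUnit T ∧ IsCompactOperator ⇑(T * adjoint T - 1)) ↔
      ∃ W K : E →L[ℝ] E,
        (adjoint W * W = 1 ∧ W * adjoint W = 1) ∧
        IsSelfAdjoint K ∧ IsCompactOperator ⇑K ∧ IsUnit (1 + K) ∧ T = W * (1 + K) := by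
  refine ⟨fun ⟨hT, hTc⟩ ↦ exists_orthogonal_mul_one_add_compact hT hTc, ?_⟩
  rintro ⟨W, K, hW, hK, hKc, hKu, rfl⟩
  exact isUnit_and_isCompactOperator_of_orthogonal_mul_one_add hW hK hKc hKu

/-- Polar-type decomposition characterizing invertible `T` with `T T* − Id` compact:
`T` is invertible with `T T* − Id` compact iff `T = W (Id + K)` for some orthogonal `W` and
self-adjoint compact `K` with `Id + K` invertible. -/
theorem stmt3 {E : Type*} [NormedAddCommGroup E] [InnerProductSpace ℝ E] [CompleteSpace E]
    [TopologicalSpace.SeparableSpace E] (T : E →L[ℝ] E) :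
    (IsUnit T ∧ IsCompactOperator ⇑(T * adjoint T - 1)) ↔
      ∃ W K : E →L[ℝ] E,
        (adjoint W * W = 1 ∧ W * adjoint W = 1) ∧
        IsSelfAdjoint K ∧ IsCompactOperator ⇑K ∧ IsUnit (1 + K) ∧ T = W * (1 + K) :=
  stmt3_general T
end

section
/- Let E be a separable Hilbert space and T ∈ 𝓛(E). Then T is invertible on E with T T* − Id_E Hilbert–Schmidt on E if and only if there exist an orthogonal (unitary) operator U on E and a self-adjoint Hilbert–Schmidt operator S on E such that Id_E + S is invertible and T = U (Id_E + S). -/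
/-!
For invertible `T`, let `P` be the positive square root of `T* T`. Then `P` is invertible,
`U = T P⁻¹` is orthogonal, and `T = U (1 + S)` with `S = P - 1`. Since `P + 1 ≥ 1` is invertible,
`P - 1 = (P² - 1) (P + 1)⁻¹` and `P² - 1 = T* (T T* - 1) (T*)⁻¹`, so `S` is Hilbert–Schmidt because
Hilbert–Schmidt operators form a two-sided ideal. Conversely, `T T* - 1 = U (S + 2) S U*`.

The square root of a positive `A` is `√r · √(1 - X)` with `X = 1 - A / r` and `r ≥ ‖A‖`, so that
`‖X‖ ≤ 1`. Here `√(1 - X) = ∑ cₙ Xⁿ` is the binomial series: `c₀ = 1`, `cₙ ≤ 0` for `n ≥ 1` and the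
partial sums of `∑ cₙ` stay nonnegative, so `∑_{n ≥ 1} |cₙ| ≤ 1`. This gives absolute convergence
for `‖X‖ ≤ 1` and, for self-adjoint `X`, positivity of the sum.
-/

open ContinuousLinearMap

open RealInnerProductSpace Finset

noncomputable def sqrtOneSubCoeff (n : ℕ) : ℝ := (-1) ^ n * Ring.choose (1 / 2 : ℝ) n

@[simp]
lemma sqrtOneSubCoeff_zero : sqrtOneSubCoeff 0 = 1 := by
  simp [sqrtOneSubCoeff]

lemma sqrtOneSubCoeff_succ (n : ℕ) :
    (2 * n + 2) * sqrtOneSubCoeff (n + 1) = (2 * n - 1) * sqrtOneSubCoeff n := by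
  have h := Ring.choose_smul_choose (1 / 2 : ℝ) (Nat.le_add_right n 1)
  rw [Nat.choose_succ_self_right, Nat.add_sub_cancel_left, Ring.choose_one_right,
    nsmul_eq_mul] at h
  simp only [sqrtOneSubCoeff, pow_succ]
  push_cast at h
  linear_combination (-2 * (-1) ^ n) * h

lemma sqrtOneSubCoeff_succ_nonpos (n : ℕ) : sqrtOneSubCoeff (n + 1) ≤ 0 := by
  induction n with
  | zero =>
    have := sqrtOneSubCoeff_succ 0
    norm_num at this
    linarith
  | succ n ih =>
    have h := sqrtOneSubCoeff_succ (n + 1)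
    push_cast at h
    nlinarith

lemma sum_range_sqrtOneSubCoeff (n : ℕ) :
    ∑ k ∈ range (n + 1), sqrtOneSubCoeff k = -(2 * n + 2) * sqrtOneSubCoeff (n + 1) := by
  induction n with
  | zero =>
    have := sqrtOneSubCoeff_succ 0
    norm_num at this ⊢
    linarith
  | succ n ih =>
    rw [sum_range_succ, ih]
    have := sqrtOneSubCoeff_succ (n + 1)
    push_cast at this ⊢
    linarith

lemma sum_range_abs_sqrtOneSubCoeff_succ_le_one (n : ℕ) :
    ∑ k ∈ range n, |sqrtOneSubCoeff (k + 1)| ≤ 1 := by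
  have h := sum_range_sqrtOneSubCoeff n
  rw [sum_range_succ', sqrtOneSubCoeff_zero] at h
  have hn := sqrtOneSubCoeff_succ_nonpos n
  simp only [fun k => abs_of_nonpos (sqrtOneSubCoeff_succ_nonpos k), sum_neg_distrib]
  nlinarith

lemma summable_abs_sqrtOneSubCoeff : Summable fun n => |sqrtOneSubCoeff n| :=
  (summable_nat_add_iff 1).1 <|
    summable_of_sum_range_le (fun _ => abs_nonneg _) sum_range_abs_sqrtOneSubCoeff_succ_le_one

lemma tsum_abs_sqrtOneSubCoeff_succ_le_one : ∑' n, |sqrtOneSubCoeff (n + 1)| ≤ 1 :=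
  ((summable_nat_add_iff 1).2 summable_abs_sqrtOneSubCoeff).tsum_le_of_sum_range_le
    sum_range_abs_sqrtOneSubCoeff_succ_le_one

/-- The Cauchy square of the series of `√(1 - x)` is `1 - x` (Chu–Vandermonde). -/
lemma sum_antidiagonal_sqrtOneSubCoeff (n : ℕ) :
    ∑ ij ∈ antidiagonal n, sqrtOneSubCoeff ij.1 * sqrtOneSubCoeff ij.2 =
      if n = 0 then 1 else if n = 1 then -1 else 0 := by
  have hvdm := Ring.add_choose_eq n (Commute.all (1 / 2 : ℝ) (1 / 2))
  rw [show (1 / 2 : ℝ) + 1 / 2 = (1 : ℕ) by norm_num, Ring.choose_natCast] at hvdm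
  have hsign : ∀ ij ∈ antidiagonal n, sqrtOneSubCoeff ij.1 * sqrtOneSubCoeff ij.2 =
      (-1) ^ n * (Ring.choose (1 / 2 : ℝ) ij.1 * Ring.choose (1 / 2 : ℝ) ij.2) := by
    intro ij hij
    rw [← mem_antidiagonal.1 hij, sqrtOneSubCoeff, sqrtOneSubCoeff, pow_add]
    ring
  rw [sum_congr rfl hsign, ← mul_sum, ← hvdm]
  rcases n with _ | _ | n <;> simp [Nat.choose_eq_zero_of_lt]

section SquareRoot

variable {E : Type*} [NormedAddCommGroup E] [InnerProductSpace ℝ E] {X : E →L[ℝ] E}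

lemma norm_sqrtOneSubCoeff_smul_pow_le (hX : ‖X‖ ≤ 1) (n : ℕ) :
    ‖sqrtOneSubCoeff n • X ^ n‖ ≤ |sqrtOneSubCoeff n| := by
  have hpow : ‖X ^ n‖ ≤ 1 := by
    rcases n with _ | n
    · simpa [one_def] using norm_id_le
    · exact (norm_pow_le' X n.succ_pos).trans (pow_le_one₀ (norm_nonneg _) hX)
  calc ‖sqrtOneSubCoeff n • X ^ n‖ ≤ |sqrtOneSubCoeff n| * ‖X ^ n‖ := by
        rw [norm_smul, Real.norm_eq_abs]
    _ ≤ |sqrtOneSubCoeff n| := mul_le_of_le_one_right (abs_nonneg _) hpow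

lemma summable_norm_sqrtOneSubCoeff_smul_pow (hX : ‖X‖ ≤ 1) :
    Summable fun n => ‖sqrtOneSubCoeff n • X ^ n‖ :=
  summable_abs_sqrtOneSubCoeff.of_nonneg_of_le (fun _ => norm_nonneg _)
    (norm_sqrtOneSubCoeff_smul_pow_le hX)

noncomputable def sqrtOneSub (X : E →L[ℝ] E) : E →L[ℝ] E := ∑' n, sqrtOneSubCoeff n • X ^ n

variable [CompleteSpace E]

lemma sqrtOneSub_mul_self (hX : ‖X‖ ≤ 1) : sqrtOneSub X * sqrtOneSub X = 1 - X := by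
  have hs := summable_norm_sqrtOneSubCoeff_smul_pow hX
  have hcauchy : ∀ n, ∑ kl ∈ antidiagonal n,
      (sqrtOneSubCoeff kl.1 • X ^ kl.1) * (sqrtOneSubCoeff kl.2 • X ^ kl.2) =
      (if n = 0 then (1 : ℝ) else if n = 1 then -1 else 0) • X ^ n := by
    intro n
    rw [← sum_antidiagonal_sqrtOneSubCoeff n, sum_smul]
    refine sum_congr rfl fun kl hkl => ?_
    rw [smul_mul_smul_comm, ← pow_add, mem_antidiagonal.1 hkl]
  rw [sqrtOneSub, tsum_mul_tsum_eq_tsum_sum_antidiagonal_of_summable_norm hs hs,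
    tsum_congr hcauchy, tsum_eq_sum (s := range 2) fun n hn => by
      simp [show n ≠ 0 by grind, show n ≠ 1 by grind]]
  simp [sum_range_succ, sub_eq_add_neg]

lemma isSelfAdjoint_sqrtOneSub (hX : IsSelfAdjoint X) : IsSelfAdjoint (sqrtOneSub X) := by
  simp only [isSelfAdjoint_iff, sqrtOneSub, tsum_star, star_smul, star_pow, hX.star_eq,
    star_trivial]

lemma isPositive_sqrtOneSub (hX : ‖X‖ ≤ 1) (hXsa : IsSelfAdjoint X) :
    (sqrtOneSub X).IsPositive := by
  refine (isPositive_iff' _).2 ⟨isSelfAdjoint_sqrtOneSub hXsa, fun x => ?_⟩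
  set f : ℕ → ℝ := fun n => ⟪x, (sqrtOneSubCoeff n • X ^ n) x⟫
  have hf : HasSum f ⟪x, sqrtOneSub X x⟫ :=
    ((summable_norm_sqrtOneSubCoeff_smul_pow hX).of_norm.hasSum.mapL (apply ℝ E x)).mapL
      (innerSL ℝ x)
  have hlower : ∀ n, -(|sqrtOneSubCoeff (n + 1)| * ‖x‖ ^ 2) ≤ f (n + 1) := fun n =>
    calc -(|sqrtOneSubCoeff (n + 1)| * ‖x‖ ^ 2)
        ≤ -(‖x‖ * (‖sqrtOneSubCoeff (n + 1) • X ^ (n + 1)‖ * ‖x‖)) := by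
          have := norm_sqrtOneSubCoeff_smul_pow_le hX (n + 1)
          rw [neg_le_neg_iff]
          nlinarith [norm_nonneg x]
      _ ≤ -(‖x‖ * ‖(sqrtOneSubCoeff (n + 1) • X ^ (n + 1)) x‖) := by
          gcongr
          exact le_opNorm _ _
      _ ≤ f (n + 1) := neg_le_of_abs_le (abs_real_inner_le_norm _ _)
  have htail : -‖x‖ ^ 2 ≤ ∑' n, f (n + 1) :=
    calc -‖x‖ ^ 2 ≤ -((∑' n, |sqrtOneSubCoeff (n + 1)|) * ‖x‖ ^ 2) := by
          have := tsum_abs_sqrtOneSubCoeff_succ_le_one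
          nlinarith [sq_nonneg ‖x‖]
      _ = ∑' n, -(|sqrtOneSubCoeff (n + 1)| * ‖x‖ ^ 2) := by rw [tsum_neg, tsum_mul_right]
      _ ≤ ∑' n, f (n + 1) :=
          (((summable_nat_add_iff 1).2 summable_abs_sqrtOneSubCoeff).mul_right _).neg.tsum_le_tsum
            hlower ((summable_nat_add_iff 1).2 hf.summable)
  have hhead : f 0 = ‖x‖ ^ 2 := by simp [f]
  rw [real_inner_comm, ← hf.tsum_eq, hf.summable.tsum_eq_zero_add, hhead]
  linarith

lemma IsSelfAdjoint.norm_le_of_abs_inner_le (hX : IsSelfAdjoint X) {c : ℝ} (hc : 0 ≤ c)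
    (h : ∀ x, |⟪X x, x⟫| ≤ c * ‖x‖ ^ 2) : ‖X‖ ≤ c := by
  rw [norm_eq_iSup_rayleighQuotient X hX.isSymmetric]
  refine ciSup_le fun x => ?_
  rcases eq_or_ne x 0 with rfl | hx
  · simpa using hc
  · rw [rayleighQuotient, reApplyInnerSelf_apply, RCLike.re_to_real, abs_div, abs_sq,
      div_le_iff₀ (by positivity)]
    exact h x

theorem ContinuousLinearMap.IsPositive.exists_isPositive_mul_self_eq {A : E →L[ℝ] E}
    (hA : A.IsPositive) :
    ∃ P : E →L[ℝ] E, P.IsPositive ∧ P * P = A := by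
  obtain ⟨r, hAr, hr⟩ : ∃ r : ℝ, ‖A‖ ≤ r ∧ 0 < r := ⟨‖A‖ + 1, by linarith, by positivity⟩
  set X : E →L[ℝ] E := 1 - r⁻¹ • A with hXdef
  have hXsa : IsSelfAdjoint X :=
    (IsSelfAdjoint.one _).sub (IsSelfAdjoint.smul (star_trivial r⁻¹) hA.isSelfAdjoint)
  have hX : ‖X‖ ≤ 1 := hXsa.norm_le_of_abs_inner_le zero_le_one fun x => by
    have hAx : ⟪A x, x⟫ ≤ r * ‖x‖ ^ 2 :=
      calc ⟪A x, x⟫ ≤ ‖A x‖ * ‖x‖ := real_inner_le_norm _ _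
        _ ≤ ‖A‖ * ‖x‖ * ‖x‖ := by gcongr; exact le_opNorm _ _
        _ ≤ r * ‖x‖ ^ 2 := by rw [mul_assoc, ← sq]; gcongr
    have hXx : ⟪X x, x⟫ = ‖x‖ ^ 2 - r⁻¹ * ⟪A x, x⟫ := by
      rw [hXdef, sub_apply, smul_apply, one_apply_eq_self, inner_sub_left, real_inner_smul_left,
        real_inner_self_eq_norm_sq]
    have h1 : r⁻¹ * ⟪A x, x⟫ ≤ ‖x‖ ^ 2 := by
      rw [inv_mul_le_iff₀ hr]; exact hAx
    have h2 := mul_nonneg (inv_nonneg.2 hr.le) (hA.inner_nonneg_left x)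
    rw [hXx, one_mul, abs_le]
    constructor <;> linarith
  refine ⟨√r • sqrtOneSub X, (isPositive_sqrtOneSub hX hXsa).smul_of_nonneg (Real.sqrt_nonneg r),
    ?_⟩
  rw [smul_mul_smul_comm, sqrtOneSub_mul_self hX, Real.mul_self_sqrt hr.le, hXdef, sub_sub_cancel,
    smul_smul, mul_inv_cancel₀ hr.ne', one_smul]

theorem exists_orthogonal_mul_isPositive_of_isUnit {T : E →L[ℝ] E} (hT : IsUnit T) :
    ∃ U P : E →L[ℝ] E, (adjoint U * U = 1 ∧ U * adjoint U = 1) ∧ P.IsPositive ∧ IsUnit P ∧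
      P * P = adjoint T * T ∧ T = U * P := by
  obtain ⟨P, hP, hPP⟩ := (isPositive_adjoint_comp_self T).exists_isPositive_mul_self_eq
  rw [← ContinuousLinearMap.mul_def] at hPP
  have hPunit : IsUnit P := by
    rw [← isUnit_pow_iff two_ne_zero, sq, hPP, ← star_eq_adjoint]
    exact hT.star.mul hT
  set Q := Ring.inverse P
  have hQ : IsSelfAdjoint Q := hP.isSelfAdjoint.ringInverse
  have hQP : Q * P = 1 := Ring.inverse_mul_cancel P hPunit
  have hU : IsUnit (T * Q) := hT.mul hPunit.ringInverse
  have hUU : adjoint (T * Q) * (T * Q) = 1 := by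
    rw [← star_eq_adjoint, star_mul, hQ.star_eq, star_eq_adjoint]
    calc Q * adjoint T * (T * Q) = Q * (adjoint T * T) * Q := by simp only [mul_assoc]
      _ = 1 := by rw [← hPP, ← mul_assoc, hQP, one_mul, Ring.mul_inverse_cancel P hPunit]
  refine ⟨T * Q, P, ⟨hUU, ?_⟩, hP, hPunit, hPP, by rw [mul_assoc, hQP, mul_one]⟩
  rw [← hU.mul_left_inj, mul_assoc, hUU, mul_one, one_mul]

end SquareRoot

section HilbertSchmidt

variable {E : Type*} [NormedAddCommGroup E] [InnerProductSpace ℝ E]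

lemma HilbertBasis.hasSum_inner_sq {ι : Type*} (b : HilbertBasis ι ℝ E) (x : E) :
    HasSum (fun i => ⟪x, b i⟫ ^ 2) (‖x‖ ^ 2) := by
  simpa only [real_inner_self_eq_norm_sq, real_inner_comm x, sq] using
    b.hasSum_inner_mul_inner x x

variable [CompleteSpace E]

lemma IsHilbertSchmidt.mul_left {A : E →L[ℝ] E} (hA : IsHilbertSchmidt A) (B : E →L[ℝ] E) :
    IsHilbertSchmidt (B * A) := by
  obtain ⟨b, hb⟩ := hA
  refine ⟨b, (hb.mul_left (‖B‖ ^ 2)).of_nonneg_of_le (fun _ => sq_nonneg _) fun j => ?_⟩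
  rw [← mul_pow]
  gcongr
  exact B.le_opNorm _

lemma IsHilbertSchmidt.adjoint {A : E →L[ℝ] E} (hA : IsHilbertSchmidt A) :
    IsHilbertSchmidt (adjoint A) := by
  obtain ⟨b, hb⟩ := hA
  have hcol : Summable fun p : ℕ × ℕ => ⟪A (b p.1), b p.2⟫ ^ 2 :=
    (summable_prod_of_nonneg fun _ => sq_nonneg _).2
      ⟨fun k => (b.hasSum_inner_sq (A (b k))).summable,
        hb.congr fun k => (b.hasSum_inner_sq (A (b k))).tsum_eq.symm⟩
  have hrow := ((summable_prod_of_nonneg (f := fun p : ℕ × ℕ => ⟪A (b p.2), b p.1⟫ ^ 2)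
    fun _ => sq_nonneg _).1 ((Equiv.prodComm ℕ ℕ).summable_iff.2 hcol)).2
  refine ⟨b, hrow.congr fun j => ?_⟩
  simp_rw [← (b.hasSum_inner_sq (ContinuousLinearMap.adjoint A (b j))).tsum_eq, adjoint_inner_left,
    real_inner_comm]

lemma IsHilbertSchmidt.mul_right {A : E →L[ℝ] E} (hA : IsHilbertSchmidt A) (B : E →L[ℝ] E) :
    IsHilbertSchmidt (A * B) := by
  simpa only [← star_eq_adjoint, star_mul, star_star] using
    (hA.adjoint.mul_left (ContinuousLinearMap.adjoint B)).adjoint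

lemma IsHilbertSchmidt.sub_one_of_mul_self_sub_one {P : E →L[ℝ] E} (hP : P.IsPositive)
    (h : IsHilbertSchmidt (P * P - 1)) : IsHilbertSchmidt (P - 1) := by
  have hunit : IsUnit (P + 1) := isUnit_of_forall_le_norm_inner_map _ one_pos fun x => by
    have hx : ⟪(P + 1) x, x⟫ = ⟪P x, x⟫ + ‖x‖ ^ 2 := by
      rw [add_apply, one_apply_eq_self, inner_add_left, real_inner_self_eq_norm_sq]
    rw [hx, Real.norm_eq_abs, NNReal.coe_one, mul_one]
    linarith [hP.inner_nonneg_left x, le_abs_self (⟪P x, x⟫ + ‖x‖ ^ 2)]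
  have hfactor : P - 1 = (P * P - 1) * Ring.inverse (P + 1) := by
    rw [show P * P - 1 = (P - 1) * (P + 1) by noncomm_ring, mul_assoc,
      Ring.mul_inverse_cancel _ hunit, mul_one]
  rw [hfactor]
  exact h.mul_right _

end HilbertSchmidt

theorem stmt4_general {E : Type*} [NormedAddCommGroup E] [InnerProductSpace ℝ E] [CompleteSpace E]
    (T : E →L[ℝ] E) :
    (IsUnit T ∧ IsHilbertSchmidt (T * adjoint T - 1)) ↔
      ∃ U S : E →L[ℝ] E,
        (adjoint U * U = 1 ∧ U * adjoint U = 1) ∧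
        IsSelfAdjoint S ∧ IsHilbertSchmidt S ∧ IsUnit (1 + S) ∧ T = U * (1 + S) := by
  constructor
  · rintro ⟨hT, hK⟩
    obtain ⟨U, P, hU, hP, hPunit, hPP, hTUP⟩ := exists_orthogonal_mul_isPositive_of_isUnit hT
    have hTadj : IsUnit (adjoint T) := star_eq_adjoint T ▸ hT.star
    have hconj : P * P - 1 = adjoint T * (T * adjoint T - 1) * Ring.inverse (adjoint T) := by
      rw [hPP, show adjoint T * (T * adjoint T - 1) = (adjoint T * T - 1) * adjoint T by
        noncomm_ring, mul_assoc, Ring.mul_inverse_cancel _ hTadj, mul_one]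
    refine ⟨U, P - 1, hU, hP.isSelfAdjoint.sub (.one _), ?_, by simpa using hPunit,
      by simpa using hTUP⟩
    exact IsHilbertSchmidt.sub_one_of_mul_self_sub_one hP (hconj ▸ (hK.mul_left _).mul_right _)
  · rintro ⟨U, S, ⟨hU, hU'⟩, hS, hSHS, hSunit, rfl⟩
    have hUunit : IsUnit U := isUnit_iff_exists.2 ⟨adjoint U, hU', hU⟩
    refine ⟨hUunit.mul hSunit, ?_⟩
    have hadj : adjoint (U * (1 + S)) = (1 + S) * adjoint U := by
      rw [← star_eq_adjoint, star_mul, star_add, star_one, hS.star_eq, star_eq_adjoint]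
    have hK : U * (1 + S) * adjoint (U * (1 + S)) - U * adjoint U =
        U * (S + 2) * S * adjoint U := by
      rw [hadj]
      noncomm_ring
    rw [hU'] at hK
    exact hK ▸ (hSHS.mul_left _).mul_right _

/-- Polar-type decomposition characterizing invertible `T` with `T T* − Id` Hilbert–Schmidt:
`T` is invertible with `T T* − Id` Hilbert–Schmidt iff `T = U (Id + S)` for some orthogonal `U`
and self-adjoint Hilbert–Schmidt `S` with `Id + S` invertible. -/
theorem stmt4 {E : Type*} [NormedAddCommGroup E] [InnerProductSpace ℝ E] [CompleteSpace E]
    [TopologicalSpace.SeparableSpace E] (T : E →L[ℝ] E) :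
    (IsUnit T ∧ IsHilbertSchmidt (T * adjoint T - 1)) ↔
      ∃ U S : E →L[ℝ] E,
        (adjoint U * U = 1 ∧ U * adjoint U = 1) ∧
        IsSelfAdjoint S ∧ IsHilbertSchmidt S ∧ IsUnit (1 + S) ∧ T = U * (1 + S) :=
  stmt4_general T
end

section
/- Let A, Ã be densely defined self-adjoint positive definite operators with compact inverses on a Hilbert space E with dom(A) = dom(Ã), and suppose Ã − A is bounded on E. Then for every α ∈ (0,1) the operator Ã^α − A^α is bounded on E. -/
/-!
Coefficientwise, Balakrishnan's formula `a ^ α = c_α⁻¹ ∫₀^∞ t ^ (α - 1) a / (a + t) dt` turns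
`c_α (Ã ^ α - A ^ α) x` into the integral of `t ^ α ((A + t)⁻¹ - (Ã + t)⁻¹) x`. The two
Balakrishnan integrals for `A ^ α x` and `Ã ^ α x` need not converge absolutely in `E`, but
their difference does: by the resolvent identity the integrand is
`t ^ α (Ã + t)⁻¹ (Ã - A) (A + t)⁻¹ x`, of norm at most `C t ^ (α - 1) (δ + t)⁻¹ ‖x‖` with
`δ = min λ > 0`, which is integrable on `(0, ∞)` for `0 < α < 1`.
-/

open Filter

noncomputable section

variable {E : Type*} [NormedAddCommGroup E] [InnerProductSpace ℂ E] [CompleteSpace E]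

/-- The spectral fractional power `A^s` of the positive operator diagonalized by the Hilbert
basis `e` with eigenvalues `lam`, applied to `x` (junk value outside the domain). -/
def diagPow (e : HilbertBasis ℕ ℂ E) (lam : ℕ → ℝ) (s : ℝ) (x : E) : E :=
  ∑' j, (((lam j ^ s : ℝ) : ℂ) * (inner ℂ (e j) x : ℂ)) • e j

/-- Membership of `x` in the domain of the spectral fractional power `A^s`. -/
def inDom (e : HilbertBasis ℕ ℂ E) (lam : ℕ → ℝ) (s : ℝ) (x : E) : Prop :=
  Summable fun j => (((lam j ^ s : ℝ) : ℂ) * (inner ℂ (e j) x : ℂ)) • e j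

open MeasureTheory Set

section DiagonalOperator

omit [CompleteSpace E]

variable (b : HilbertBasis ℕ ℂ E)

lemma HilbertBasis.eq_of_forall_inner_eq {x y : E} (h : ∀ i, inner ℂ (b i) x = inner ℂ (b i) y) :
    x = y :=
  (b.hasSum_repr x).unique <| by simpa [b.repr_apply_apply, h] using b.hasSum_repr y

lemma HilbertBasis.hasSum_norm_inner_sq (x : E) :
    HasSum (fun j => ‖inner ℂ (b j) x‖ ^ 2) (‖x‖ ^ 2) := by
  have h := b.hasSum_inner_mul_inner x x
  simp only [← inner_conj_symm x (b _), Complex.conj_mul', inner_self_eq_norm_sq_to_K] at h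
  refine Complex.hasSum_ofReal.mp ?_
  push_cast
  exact h

lemma HilbertBasis.inner_tsum_smul {c : ℕ → ℂ} (h : Summable fun j => c j • b j) (i : ℕ) :
    inner ℂ (b i) (∑' j, c j • b j) = c i := by
  change innerSL ℂ (b i) _ = _
  rw [(innerSL ℂ (b i)).map_tsum h, tsum_eq_single i fun j hj => by
    simp [b.orthonormal.inner_eq_zero (Ne.symm hj)]]
  simp [b.orthonormal.1 i]

def diagOp (φ : ℕ → ℝ) (x : E) : E :=
  ∑' j, ((φ j : ℂ) * inner ℂ (b j) x) • b j

variable {b}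

lemma inner_diagOp {φ : ℕ → ℝ} {x : E}
    (h : Summable fun j => ((φ j : ℂ) * inner ℂ (b j) x) • b j) (i : ℕ) :
    inner ℂ (b i) (diagOp b φ x) = φ i * inner ℂ (b i) x :=
  b.inner_tsum_smul h i

lemma hasSum_inner_diagOp {φ : ℕ → ℝ} {x : E}
    (h : Summable fun j => ((φ j : ℂ) * inner ℂ (b j) x) • b j) (y : E) :
    HasSum (fun k => (φ k : ℂ) * inner ℂ (b k) x * inner ℂ y (b k))
      (inner ℂ y (diagOp b φ x)) := by
  have := h.hasSum.mapL (innerSL ℂ y)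
  simp only [innerSL_apply_apply, inner_smul_right] at this
  exact this

lemma aestronglyMeasurable_diagOp {μ : Measure ℝ} {S : Set ℝ} (hS : MeasurableSet S)
    {φ : ℕ → ℝ → ℝ} (hφ : ∀ j, ContinuousOn (φ j) S) (x : E)
    (hsum : ∀ t ∈ S, Summable fun j => ((φ j t : ℂ) * inner ℂ (b j) x) • b j) :
    AEStronglyMeasurable (fun t => diagOp b (fun j => φ j t) x) (μ.restrict S) := by
  refine aestronglyMeasurable_of_tendsto_ae atTop (fun n => ?_) ?_
    (f := fun n t => ∑ j ∈ Finset.range n, ((φ j t : ℂ) * inner ℂ (b j) x) • b j)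
  · refine ContinuousOn.aestronglyMeasurable ?_ hS
    fun_prop
  · filter_upwards [ae_restrict_mem hS] with t ht
    exact (hsum t ht).hasSum.tendsto_sum_nat

end DiagonalOperator

section BoundedSymbol

variable (b : HilbertBasis ℕ ℂ E)

lemma HilbertBasis.summable_smul_iff (c : ℕ → ℂ) :
    Summable (fun j => c j • b j) ↔ Summable (fun j => ‖c j‖ ^ 2) := by
  simpa [LinearIsometry.toSpanSingleton_apply] using
    b.orthonormal.orthogonalFamily.summable_iff_norm_sq_summable c

lemma summable_diagOp_of_abs_le {φ : ℕ → ℝ} {M : ℝ} (hφ : ∀ j, |φ j| ≤ M) (x : E) :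
    Summable fun j => ((φ j : ℂ) * inner ℂ (b j) x) • b j := by
  refine (b.summable_smul_iff _).mpr <| .of_nonneg_of_le (fun j => by positivity) (fun j => ?_)
    ((b.hasSum_norm_inner_sq x).summable.mul_left (M ^ 2))
  rw [norm_mul, Complex.norm_real, Real.norm_eq_abs, mul_pow]
  gcongr
  exact hφ j

variable {b}

lemma norm_diagOp_le {φ : ℕ → ℝ} {M : ℝ} (hφ : ∀ j, |φ j| ≤ M) (x : E) :
    ‖diagOp b φ x‖ ≤ M * ‖x‖ := by
  have hM : 0 ≤ M := (abs_nonneg _).trans (hφ 0)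
  refine (pow_le_pow_iff_left₀ (norm_nonneg _) (by positivity) two_ne_zero).mp ?_
  rw [mul_pow]
  refine hasSum_le (fun j => ?_) (b.hasSum_norm_inner_sq _) ((b.hasSum_norm_inner_sq x).mul_left _)
  rw [inner_diagOp (summable_diagOp_of_abs_le b hφ x), norm_mul, Complex.norm_real,
    Real.norm_eq_abs, mul_pow]
  gcongr
  exact hφ j

end BoundedSymbol

section Resolvent

variable {b : HilbertBasis ℕ ℂ E} {ν : ℕ → ℝ} {d t : ℝ}

def diagResolvent (b : HilbertBasis ℕ ℂ E) (ν : ℕ → ℝ) (t : ℝ) (x : E) : E :=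
  diagOp b (fun j => (ν j + t)⁻¹) x

lemma abs_inv_add_le (hν : ∀ j, d ≤ ν j) (hdt : 0 < d + t) (j : ℕ) :
    |(ν j + t)⁻¹| ≤ (d + t)⁻¹ := by
  rw [abs_of_pos (inv_pos.2 (by linarith [hν j]))]
  exact inv_anti₀ hdt (by linarith [hν j])

lemma inner_diagResolvent (hν : ∀ j, d ≤ ν j) (hdt : 0 < d + t) (x : E) (i : ℕ) :
    inner ℂ (b i) (diagResolvent b ν t x) = ((ν i + t)⁻¹ : ℝ) * inner ℂ (b i) x :=
  inner_diagOp (summable_diagOp_of_abs_le b (abs_inv_add_le hν hdt) x) i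

lemma norm_diagResolvent_le (hν : ∀ j, d ≤ ν j) (hdt : 0 < d + t) (x : E) :
    ‖diagResolvent b ν t x‖ ≤ (d + t)⁻¹ * ‖x‖ :=
  norm_diagOp_le (abs_inv_add_le hν hdt) x

lemma inDom_one_diagResolvent (b : HilbertBasis ℕ ℂ E) (hν : ∀ j, 0 ≤ ν j) (ht : 0 < t)
    (x : E) :
    inDom b ν 1 (diagResolvent b ν t x) := by
  have hsymb : ∀ j, |ν j * (ν j + t)⁻¹| ≤ 1 := fun j => by
    rw [abs_of_nonneg (by have := hν j; positivity), mul_inv_le_iff₀ (by linarith [hν j])]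
    linarith
  unfold inDom
  refine (summable_diagOp_of_abs_le b hsymb x).congr fun j => ?_
  rw [inner_diagResolvent (d := 0) hν (by simpa using ht), Real.rpow_one]
  push_cast
  rw [mul_assoc]

lemma diagPow_one_diagResolvent (hν : ∀ j, 0 ≤ ν j) (ht : 0 < t) (x : E) :
    diagPow b ν 1 (diagResolvent b ν t x) = x - (t : ℂ) • diagResolvent b ν t x := by
  refine b.eq_of_forall_inner_eq fun i => ?_
  have hνt : (ν i : ℂ) + t ≠ 0 := by exact_mod_cast (by linarith [hν i] : ν i + t ≠ 0)
  rw [diagPow, b.inner_tsum_smul (inDom_one_diagResolvent b hν ht x), inner_sub_right,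
    inner_smul_right, inner_diagResolvent (d := 0) hν (by simpa using ht), Real.rpow_one]
  push_cast
  field_simp
  ring

lemma aestronglyMeasurable_diagResolvent (hν : ∀ j, 0 ≤ ν j) (x : E) :
    AEStronglyMeasurable (fun t => diagResolvent b ν t x) (volume.restrict (Ioi 0)) :=
  aestronglyMeasurable_diagOp measurableSet_Ioi
    (fun j => (continuousOn_const.add continuousOn_id).inv₀ fun t (ht : 0 < t) =>
      (add_pos_of_nonneg_of_pos (hν j) ht).ne')
    x fun t (ht : 0 < t) =>
      summable_diagOp_of_abs_le b (abs_inv_add_le hν (by simpa using ht)) x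

end Resolvent

section ResolventComparison

variable {e f : HilbertBasis ℕ ℂ E} {lam mu : ℕ → ℝ} {t : ℝ}

lemma diagResolvent_sub_diagResolvent (hlam : ∀ j, 0 ≤ lam j) (hmu : ∀ j, 0 ≤ mu j) (ht : 0 < t)
    (x : E) (hdom : inDom f mu 1 (diagResolvent e lam t x)) :
    diagResolvent e lam t x - diagResolvent f mu t x =
      diagResolvent f mu t (diagPow f mu 1 (diagResolvent e lam t x) -
        diagPow e lam 1 (diagResolvent e lam t x)) := by
  have ht' : (0 : ℝ) < 0 + t := by simpa using ht
  refine f.eq_of_forall_inner_eq fun i => ?_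
  have hμt : (mu i : ℂ) + t ≠ 0 := by exact_mod_cast (by linarith [hmu i] : mu i + t ≠ 0)
  have hAz : inner ℂ (f i) (diagPow f mu 1 (diagResolvent e lam t x)) =
      mu i * inner ℂ (f i) (diagResolvent e lam t x) := by
    rw [diagPow, f.inner_tsum_smul hdom, Real.rpow_one]
  rw [diagPow_one_diagResolvent hlam ht]
  simp only [inner_sub_right, inner_smul_right, inner_diagResolvent hmu ht', hAz]
  push_cast
  field_simp
  ring

lemma norm_diagResolvent_sub_le {δ C : ℝ} (hδ : 0 ≤ δ) (hlam : ∀ j, δ ≤ lam j)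
    (hmu : ∀ j, 0 ≤ mu j) (hdom : ∀ x, inDom e lam 1 x → inDom f mu 1 x) (hC : 0 ≤ C)
    (hB : ∀ x, inDom e lam 1 x → ‖diagPow f mu 1 x - diagPow e lam 1 x‖ ≤ C * ‖x‖)
    (ht : 0 < t) (x : E) :
    ‖diagResolvent e lam t x - diagResolvent f mu t x‖ ≤ C * (t⁻¹ * (δ + t)⁻¹) * ‖x‖ := by
  have hlam0 : ∀ j, 0 ≤ lam j := fun j => hδ.trans (hlam j)
  have hz := inDom_one_diagResolvent e hlam0 ht x
  rw [diagResolvent_sub_diagResolvent hlam0 hmu ht x (hdom _ hz)]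
  calc _ ≤ (0 + t)⁻¹ * ‖diagPow f mu 1 (diagResolvent e lam t x) -
          diagPow e lam 1 (diagResolvent e lam t x)‖ :=
        norm_diagResolvent_le hmu (by simpa using ht) _
    _ ≤ t⁻¹ * (C * ((δ + t)⁻¹ * ‖x‖)) := by
        rw [zero_add]
        gcongr
        exact (hB _ hz).trans (by gcongr; exact norm_diagResolvent_le hlam (by linarith) x)
    _ = C * (t⁻¹ * (δ + t)⁻¹) * ‖x‖ := by ring

end ResolventComparison

section BalakrishnanKernel

def balakrishnanKernel (α a t : ℝ) : ℝ := t ^ (α - 1) * (a / (a + t))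

def balakrishnanConst (α : ℝ) : ℝ := ∫ t in Ioi 0, balakrishnanKernel α 1 t

variable {α a : ℝ}

lemma balakrishnanKernel_nonneg (ha : 0 ≤ a) {t : ℝ} (ht : 0 ≤ t) :
    0 ≤ balakrishnanKernel α a t := by
  unfold balakrishnanKernel
  positivity

lemma balakrishnanKernel_sub_balakrishnanKernel {b t : ℝ} (ha : 0 ≤ a) (hb : 0 ≤ b)
    (ht : 0 < t) :
    balakrishnanKernel α b t - balakrishnanKernel α a t = t ^ α * ((a + t)⁻¹ - (b + t)⁻¹) := by
  unfold balakrishnanKernel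
  rw [Real.rpow_sub_one ht.ne']
  field_simp
  ring

lemma continuousOn_balakrishnanKernel (ha : 0 ≤ a) :
    ContinuousOn (balakrishnanKernel α a) (Ioi 0) := by
  intro t (ht : 0 < t)
  unfold balakrishnanKernel
  exact ((Real.continuousAt_rpow_const t _ (Or.inl ht.ne')).mul
    (continuousAt_const.div (continuousAt_const.add continuousAt_id)
      (add_pos_of_nonneg_of_pos ha ht).ne')).continuousWithinAt

lemma integrableOn_balakrishnanKernel (hα0 : 0 < α) (hα1 : α < 1) (ha : 0 ≤ a) :
    IntegrableOn (balakrishnanKernel α a) (Ioi 0) := by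
  have hmeas : ∀ s ⊆ Ioi (0 : ℝ), MeasurableSet s →
      AEStronglyMeasurable (balakrishnanKernel α a) (volume.restrict s) :=
    fun s hs hsm => ((continuousOn_balakrishnanKernel ha).mono hs).aestronglyMeasurable hsm
  rw [← Ioc_union_Ioi_eq_Ioi zero_le_one]
  refine IntegrableOn.union ?_ ?_
  · have hint : IntegrableOn (fun t : ℝ => t ^ (α - 1)) (Ioc 0 1) := by
      rw [← intervalIntegrable_iff_integrableOn_Ioc_of_le zero_le_one]
      exact intervalIntegral.intervalIntegrable_rpow' (by linarith)
    refine hint.mono' (hmeas _ Ioc_subset_Ioi_self measurableSet_Ioc) ?_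
    filter_upwards [ae_restrict_mem measurableSet_Ioc] with t ⟨ht, _⟩
    rw [Real.norm_of_nonneg (balakrishnanKernel_nonneg ha ht.le)]
    refine mul_le_of_le_one_right (by positivity) ?_
    exact div_le_one_of_le₀ (by linarith) (by positivity)
  · have hint : IntegrableOn (fun t : ℝ => a * t ^ (α - 2)) (Ioi 1) :=
      (integrableOn_Ioi_rpow_of_lt (by linarith) one_pos).const_mul a
    refine hint.mono' (hmeas _ (Ioi_subset_Ioi zero_le_one) measurableSet_Ioi) ?_
    filter_upwards [ae_restrict_mem measurableSet_Ioi] with t ht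
    have ht : 1 < t := ht
    have ht0 : 0 < t := one_pos.trans ht
    rw [Real.norm_of_nonneg (balakrishnanKernel_nonneg ha ht0.le), balakrishnanKernel,
      show α - 2 = α - 1 - 1 by ring,
      Real.rpow_sub_one ht0.ne' (α - 1)]
    calc t ^ (α - 1) * (a / (a + t)) ≤ t ^ (α - 1) * (a / t) := by gcongr; linarith
      _ = a * (t ^ (α - 1) / t) := by ring

lemma integral_balakrishnanKernel (ha : 0 < a) :
    ∫ t in Ioi 0, balakrishnanKernel α a t = a ^ α * balakrishnanConst α := by
  have hscale := integral_comp_mul_left_Ioi (balakrishnanKernel α a) 0 ha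
  rw [mul_zero, smul_eq_mul] at hscale
  have hsub :
      ∫ s in Ioi 0, balakrishnanKernel α a (a * s) = a ^ (α - 1) * balakrishnanConst α := by
    rw [balakrishnanConst, ← integral_const_mul]
    refine setIntegral_congr_fun measurableSet_Ioi fun s (hs : 0 < s) => ?_
    simp only [balakrishnanKernel]
    rw [Real.mul_rpow ha.le hs.le, show a / (a + a * s) = 1 / (1 + s) by field_simp]
    ring
  rw [hsub] at hscale
  calc ∫ t in Ioi 0, balakrishnanKernel α a t
      = a * (a⁻¹ * ∫ t in Ioi 0, balakrishnanKernel α a t) := by field_simp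
    _ = a ^ α * balakrishnanConst α := by
        rw [← hscale, Real.rpow_sub_one ha.ne']
        field_simp

lemma balakrishnanConst_pos (hα0 : 0 < α) (hα1 : α < 1) : 0 < balakrishnanConst α := by
  refine (setIntegral_pos_iff_support_of_nonneg_ae ?_
    (integrableOn_balakrishnanKernel hα0 hα1 zero_le_one)).mpr ?_
  · filter_upwards [ae_restrict_mem measurableSet_Ioi] with t ht
    exact balakrishnanKernel_nonneg zero_le_one (le_of_lt ht)
  · have hsupp : Ioi (0 : ℝ) ⊆ Function.support (balakrishnanKernel α 1) :=
      fun t (ht : 0 < t) =>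
        (by unfold balakrishnanKernel; positivity : 0 < balakrishnanKernel α 1 t).ne'
    simp [Set.inter_eq_right.mpr hsupp]

end BalakrishnanKernel

lemma hasSum_integral_balakrishnanKernel_sub {α : ℝ} (hα0 : 0 < α) (hα1 : α < 1) {a : ℕ → ℝ}
    (ha : ∀ k, 0 < a k) {b : ℝ} (hb : 0 < b) {c : ℕ → ℂ} (hc : Summable fun k => ‖c k‖)
    (hac : Summable fun k => a k ^ α * ‖c k‖) :
    HasSum (fun k => (((b ^ α - a k ^ α) * balakrishnanConst α : ℝ) : ℂ) * c k)
      (∫ t in Ioi 0,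
        ∑' k, ((balakrishnanKernel α b t - balakrishnanKernel α (a k) t : ℝ) : ℂ) * c k) := by
  have hK : ∀ {a}, 0 < a → IntegrableOn (balakrishnanKernel α a) (Ioi 0) :=
    fun ha => integrableOn_balakrishnanKernel hα0 hα1 ha.le
  have hF : ∀ k, IntegrableOn
      (fun t => ((balakrishnanKernel α b t - balakrishnanKernel α (a k) t : ℝ) : ℂ) * c k)
      (Ioi 0) :=
    fun k => ((hK hb).sub (hK (ha k))).ofReal.mul_const _
  have hnorm : ∀ k, ∫ t in Ioi 0,
      ‖((balakrishnanKernel α b t - balakrishnanKernel α (a k) t : ℝ) : ℂ) * c k‖ ≤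
        b ^ α * balakrishnanConst α * ‖c k‖ + balakrishnanConst α * (a k ^ α * ‖c k‖) := by
    intro k
    calc _ ≤ ∫ t in Ioi 0,
          (balakrishnanKernel α b t + balakrishnanKernel α (a k) t) * ‖c k‖ := by
          refine setIntegral_mono_on (hF k).norm (((hK hb).add (hK (ha k))).mul_const _)
            measurableSet_Ioi fun t (ht : 0 < t) => ?_
          rw [norm_mul, Complex.norm_real, Real.norm_eq_abs]
          gcongr
          refine (abs_sub _ _).trans_eq ?_
          rw [abs_of_nonneg (balakrishnanKernel_nonneg hb.le ht.le),
            abs_of_nonneg (balakrishnanKernel_nonneg (ha k).le ht.le)]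
      _ = _ := by
          rw [integral_mul_const, integral_add (hK hb) (hK (ha k)),
            integral_balakrishnanKernel hb, integral_balakrishnanKernel (ha k)]
          ring
  have hsum := hasSum_integral_of_summable_integral_norm hF <|
    .of_nonneg_of_le (fun k => integral_nonneg fun t => norm_nonneg _) hnorm
      ((hc.mul_left _).add (hac.mul_left _))
  refine hsum.congr_fun fun k => ?_
  rw [integral_mul_const, integral_complex_ofReal, integral_sub (hK hb) (hK (ha k)),
    integral_balakrishnanKernel hb, integral_balakrishnanKernel (ha k)]
  push_cast
  ring

lemma summable_norm_mul_norm_of_summable_sq {u v : ℕ → ℂ} (hu : Summable fun k => ‖u k‖ ^ 2)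
    (hv : Summable fun k => ‖v k‖ ^ 2) : Summable fun k => ‖u k‖ * ‖v k‖ :=
  .of_nonneg_of_le (fun _ => by positivity)
    (fun k => by nlinarith [two_mul_le_add_sq ‖u k‖ ‖v k‖, norm_nonneg (u k), norm_nonneg (v k)])
    (hu.add hv)

section FractionalPowerComparison

variable {e f : HilbertBasis ℕ ℂ E} {lam mu : ℕ → ℝ} {α : ℝ}

lemma hasSum_inner_rpow_smul_diagResolvent_sub (hlam : ∀ j, 0 ≤ lam j) (hmu : ∀ j, 0 ≤ mu j)
    {t : ℝ} (ht : 0 < t) (x : E) (i : ℕ) :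
    HasSum (fun k => ((balakrishnanKernel α (mu i) t - balakrishnanKernel α (lam k) t : ℝ) : ℂ) *
        (inner ℂ (e k) x * inner ℂ (f i) (e k)))
      (inner ℂ (f i) (((t ^ α : ℝ) : ℂ) • (diagResolvent e lam t x - diagResolvent f mu t x))) := by
  have ht' : (0 : ℝ) < 0 + t := by simpa using ht
  have hRe := hasSum_inner_diagOp (summable_diagOp_of_abs_le e (abs_inv_add_le hlam ht') x) (f i)
  have hx := e.hasSum_inner_mul_inner (f i) x
  rw [inner_smul_right, inner_sub_right, inner_diagResolvent hmu ht']
  refine ((hRe.sub (hx.mul_left (((mu i + t)⁻¹ : ℝ) : ℂ))).mul_left ((t ^ α : ℝ) : ℂ)).congr_fun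
    fun k => ?_
  rw [balakrishnanKernel_sub_balakrishnanKernel (hlam k) (hmu i) ht]
  push_cast
  ring

lemma integral_inner_rpow_smul_diagResolvent_sub (hα0 : 0 < α) (hα1 : α < 1)
    (hlam : ∀ j, 0 < lam j) (hmu : ∀ j, 0 < mu j) {x : E} (hxe : inDom e lam α x)
    (hxf : inDom f mu α x) (i : ℕ) :
    ∫ t in Ioi 0,
        inner ℂ (f i) (((t ^ α : ℝ) : ℂ) • (diagResolvent e lam t x - diagResolvent f mu t x)) =
      balakrishnanConst α * inner ℂ (f i) (diagPow f mu α x - diagPow e lam α x) := by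
  have hx_sq := (e.hasSum_norm_inner_sq x).summable
  have hfi_sq : Summable fun k => ‖inner ℂ (f i) (e k)‖ ^ 2 := by
    simpa [norm_inner_symm] using (e.hasSum_norm_inner_sq (f i)).summable
  have hAx_sq := (e.summable_smul_iff _).mp hxe
  have hInt := hasSum_integral_balakrishnanKernel_sub hα0 hα1 hlam (hmu i)
    (c := fun k => inner ℂ (e k) x * inner ℂ (f i) (e k))
    (by simpa only [norm_mul] using summable_norm_mul_norm_of_summable_sq hx_sq hfi_sq)
    (by
      refine (summable_norm_mul_norm_of_summable_sq hAx_sq hfi_sq).congr fun k => ?_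
      rw [norm_mul, norm_mul, Complex.norm_real,
        Real.norm_of_nonneg (by have := hlam k; positivity)]
      ring)
  rw [setIntegral_congr_fun measurableSet_Ioi fun t (ht : 0 < t) =>
    (hasSum_inner_rpow_smul_diagResolvent_sub (hlam · |>.le) (hmu · |>.le) ht x i).tsum_eq.symm]
  refine hInt.unique ?_
  have hx := e.hasSum_inner_mul_inner (f i) x
  have hAx := hasSum_inner_diagOp hxe (f i)
  rw [inner_sub_right, diagPow, f.inner_tsum_smul hxf]
  refine (((hx.mul_left ((mu i ^ α : ℝ) : ℂ)).sub hAx).mul_left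
    (balakrishnanConst α : ℂ)).congr_fun fun k => ?_
  push_cast
  ring

lemma norm_rpow_smul_diagResolvent_sub_le {δ C t : ℝ} (hδ : 0 < δ) (hlam : ∀ j, δ ≤ lam j)
    (hmu : ∀ j, 0 ≤ mu j) (hdom : ∀ x, inDom e lam 1 x → inDom f mu 1 x) (hC : 0 ≤ C)
    (hB : ∀ x, inDom e lam 1 x → ‖diagPow f mu 1 x - diagPow e lam 1 x‖ ≤ C * ‖x‖)
    (ht : 0 < t) (x : E) :
    ‖((t ^ α : ℝ) : ℂ) • (diagResolvent e lam t x - diagResolvent f mu t x)‖ ≤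
      C * δ⁻¹ * ‖x‖ * balakrishnanKernel α δ t :=
  calc _ ≤ t ^ α * (C * (t⁻¹ * (δ + t)⁻¹) * ‖x‖) := by
        rw [norm_smul, Complex.norm_real, Real.norm_of_nonneg (by positivity)]
        gcongr
        exact norm_diagResolvent_sub_le hδ.le hlam hmu hdom hC hB ht x
    _ = C * δ⁻¹ * ‖x‖ * balakrishnanKernel α δ t := by
        rw [balakrishnanKernel, Real.rpow_sub_one ht.ne']
        field_simp

theorem norm_diagPow_sub_le {δ C : ℝ} (hα0 : 0 < α) (hα1 : α < 1) (hδ : 0 < δ)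
    (hlam : ∀ j, δ ≤ lam j) (hmu : ∀ j, 0 < mu j) (hdom : ∀ x, inDom e lam 1 x → inDom f mu 1 x)
    (hC : 0 ≤ C) (hB : ∀ x, inDom e lam 1 x → ‖diagPow f mu 1 x - diagPow e lam 1 x‖ ≤ C * ‖x‖)
    {x : E} (hxe : inDom e lam α x) (hxf : inDom f mu α x) :
    ‖diagPow f mu α x - diagPow e lam α x‖ ≤ C * δ ^ (α - 1) * ‖x‖ := by
  have hlam0 : ∀ j, 0 ≤ lam j := fun j => hδ.le.trans (hlam j)
  have hmu0 : ∀ j, 0 ≤ mu j := fun j => (hmu j).le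
  set G : ℝ → E := fun t => ((t ^ α : ℝ) : ℂ) • (diagResolvent e lam t x - diagResolvent f mu t x)
  have hG_le : ∀ t ∈ Ioi (0 : ℝ), ‖G t‖ ≤ C * δ⁻¹ * ‖x‖ * balakrishnanKernel α δ t :=
    fun t ht => norm_rpow_smul_diagResolvent_sub_le hδ hlam hmu0 hdom hC hB ht x
  have hG_meas : AEStronglyMeasurable G (volume.restrict (Ioi 0)) :=
    (ContinuousOn.aestronglyMeasurable (fun t (ht : 0 < t) =>
        (Complex.continuous_ofReal.continuousAt.comp
          (Real.continuousAt_rpow_const t α (Or.inl ht.ne'))).continuousWithinAt)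
      measurableSet_Ioi).smul
      ((aestronglyMeasurable_diagResolvent hlam0 x).sub (aestronglyMeasurable_diagResolvent hmu0 x))
  have hK := (integrableOn_balakrishnanKernel hα0 hα1 hδ.le).const_mul (C * δ⁻¹ * ‖x‖)
  have hG : IntegrableOn G (Ioi 0) :=
    hK.mono' hG_meas ((ae_restrict_mem measurableSet_Ioi).mono hG_le)
  have hG_integral : ∫ t in Ioi 0, G t =
      (balakrishnanConst α : ℂ) • (diagPow f mu α x - diagPow e lam α x) :=
    f.eq_of_forall_inner_eq fun i => by
      rw [← integral_inner hG, inner_smul_right,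
        integral_inner_rpow_smul_diagResolvent_sub hα0 hα1 (fun j => hδ.trans_le (hlam j)) hmu
          hxe hxf i]
  have hc := balakrishnanConst_pos hα0 hα1
  refine le_of_mul_le_mul_left ?_ hc
  calc balakrishnanConst α * ‖diagPow f mu α x - diagPow e lam α x‖
      = ‖∫ t in Ioi 0, G t‖ := by
        rw [hG_integral, norm_smul, Complex.norm_real, Real.norm_of_nonneg hc.le]
    _ ≤ ∫ t in Ioi 0, C * δ⁻¹ * ‖x‖ * balakrishnanKernel α δ t :=
        norm_integral_le_of_norm_le hK ((ae_restrict_mem measurableSet_Ioi).mono hG_le)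
    _ = balakrishnanConst α * (C * δ ^ (α - 1) * ‖x‖) := by
        rw [integral_const_mul, integral_balakrishnanKernel hδ, Real.rpow_sub_one hδ.ne']
        field_simp

end FractionalPowerComparison

theorem stmt12_general (e f : HilbertBasis ℕ ℂ E) (lam mu : ℕ → ℝ)
    (hlam : ∀ j, 0 < lam j) (hmu : ∀ j, 0 < mu j)
    (hlam' : Tendsto lam atTop atTop)
    (hdom : ∀ x, inDom e lam 1 x ↔ inDom f mu 1 x)
    (hB : ∃ C : ℝ, ∀ x, inDom e lam 1 x →
      ‖diagPow f mu 1 x - diagPow e lam 1 x‖ ≤ C * ‖x‖) :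
    ∀ α ∈ Set.Ioo (0 : ℝ) 1,
      ∃ C : ℝ, ∀ x, inDom e lam α x → inDom f mu α x →
        ‖diagPow f mu α x - diagPow e lam α x‖ ≤ C * ‖x‖ := by
  rintro α ⟨hα0, hα1⟩
  obtain ⟨j₀, hj₀⟩ := (Nat.cofinite_eq_atTop ▸ hlam').exists_forall_le
  obtain ⟨C, hC⟩ := hB
  refine ⟨|C| * lam j₀ ^ (α - 1), fun x hxe hxf => ?_⟩
  refine norm_diagPow_sub_le hα0 hα1 (hlam j₀) hj₀ hmu (fun x => (hdom x).mp) (abs_nonneg C)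
    (fun x hx => ?_) hxe hxf
  exact (hC x hx).trans (by gcongr; exact le_abs_self C)

/-- If `A`, `Ã` are densely defined self-adjoint positive definite operators with compact
inverses (encoded by spectral data `(e, lam)`, `(f, mu)`), with equal domains
`dom(A) = dom(Ã)`, and `Ã − A` is bounded on `E`, then for every `α ∈ (0,1)` the operator
`Ã^α − A^α` is bounded on `E` (on its natural dense domain). -/
theorem stmt12 (e f : HilbertBasis ℕ ℂ E) (lam mu : ℕ → ℝ)
    (hlam : ∀ j, 0 < lam j) (hmu : ∀ j, 0 < mu j)
    (hlam' : Tendsto lam atTop atTop) (hmu' : Tendsto mu atTop atTop)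
    (hdom : ∀ x, inDom e lam 1 x ↔ inDom f mu 1 x)
    (hB : ∃ C : ℝ, ∀ x, inDom e lam 1 x →
      ‖diagPow f mu 1 x - diagPow e lam 1 x‖ ≤ C * ‖x‖) :
    ∀ α ∈ Set.Ioo (0 : ℝ) 1,
      ∃ C : ℝ, ∀ x, inDom e lam α x → inDom f mu α x →
        ‖diagPow f mu α x - diagPow e lam α x‖ ≤ C * ‖x‖ :=
  stmt12_general e f lam mu hlam hmu hlam' hdom hB

end
end
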